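/- arXiv:2210.00614 — 7 statements merged into one kernel-verified Lean document; each statement's English description precedes it below -/
import Mathlib

section
/- Let Z be a real Banach space, G a subspace of Z, and z* ∈ Z*. Then dist(z*, G^⊥) = sup{ |z*(z)| : z ∈ G, ‖z‖ ≤ 1 }, where G^⊥ = { w* ∈ Z* : w*(g) = 0 for all g ∈ G }. Moreover, dist(z*, G^⊥) ≥ (1/2)·inf{ ‖z* − w*‖ : w* ∈ G^⊥, ‖w*‖ = ‖z*‖ }. -/
/-!
Every `w ∈ G^⊥` satisfies `(f - w)|_G = f|_G`, so `‖f|_G‖ ≤ ‖f - w‖`; conversely a norm-preserving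
Hahn–Banach extension `F` of `f|_G` gives `f - F ∈ G^⊥` at distance exactly `‖f|_G‖`, and
`‖f|_G‖` is the supremum in the statement. For the second part, rescaling `w ∈ G^⊥` to norm `‖f‖`
moves it by `|‖w‖ - ‖f‖| ≤ ‖f - w‖`, so at most doubles its distance to `f`.
-/

open Metric

section Rescale

variable {V : Type*} [NormedAddCommGroup V] [NormedSpace ℝ V]

theorem norm_sub_div_norm_smul_le (f w : V) : ‖f - (‖f‖ / ‖w‖) • w‖ ≤ 2 * ‖f - w‖ := by
  rcases eq_or_ne w 0 with rfl | hw
  · simp [two_mul]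
  have hw' : 0 < ‖w‖ := norm_pos_iff.mpr hw
  have h_rescale : ‖w - (‖f‖ / ‖w‖) • w‖ = |‖w‖ - ‖f‖| := by
    rw [show w - (‖f‖ / ‖w‖) • w = (1 - ‖f‖ / ‖w‖) • w by module, norm_smul, Real.norm_eq_abs,
      ← abs_norm w, ← abs_mul, abs_norm, sub_mul, one_mul, div_mul_cancel₀ _ hw'.ne']
  calc ‖f - (‖f‖ / ‖w‖) • w‖ = ‖(f - w) + (w - (‖f‖ / ‖w‖) • w)‖ := by abel_nf
    _ ≤ ‖f - w‖ + |‖w‖ - ‖f‖| := h_rescale ▸ norm_add_le _ _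
    _ ≤ 2 * ‖f - w‖ := by linarith [norm_sub_rev w f ▸ abs_norm_sub_norm_le w f]

theorem Submodule.exists_norm_eq_norm_sub_le_two_mul (K : Submodule ℝ V) {f w : V}
    (hw : w ∈ K) (h : ∃ g ∈ K, ‖g‖ = ‖f‖) : ∃ g ∈ K, ‖g‖ = ‖f‖ ∧ ‖f - g‖ ≤ 2 * ‖f - w‖ := by
  rcases eq_or_ne w 0 with rfl | hw0
  · obtain ⟨g, hgK, hg⟩ := h
    refine ⟨g, hgK, hg, ?_⟩
    simpa [two_mul, hg] using norm_sub_le f g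
  · have hw' : 0 < ‖w‖ := norm_pos_iff.mpr hw0
    refine ⟨(‖f‖ / ‖w‖) • w, K.smul_mem _ hw, ?_, norm_sub_div_norm_smul_le f w⟩
    rw [norm_smul, Real.norm_of_nonneg (by positivity), div_mul_cancel₀ _ hw'.ne']

theorem Submodule.sInf_norm_sub_of_norm_eq_le_two_mul_infDist (K : Submodule ℝ V) (f : V) :
    sInf {r : ℝ | ∃ g ∈ K, ‖g‖ = ‖f‖ ∧ r = ‖f - g‖} ≤ 2 * infDist f K := by
  set T := {r : ℝ | ∃ g ∈ K, ‖g‖ = ‖f‖ ∧ r = ‖f - g‖}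
  rcases T.eq_empty_or_nonempty with hT | ⟨-, g₀, hg₀K, hg₀, -⟩
  · rw [hT, Real.sInf_empty]
    exact mul_nonneg zero_le_two infDist_nonneg
  have hT_bdd : BddBelow T := ⟨0, by rintro - ⟨g, -, -, rfl⟩; exact norm_nonneg _⟩
  suffices sInf T / 2 ≤ infDist f K by linarith
  refine (le_infDist ⟨0, K.zero_mem⟩).mpr fun w hw => ?_
  obtain ⟨g, hgK, hg, hfg⟩ := K.exists_norm_eq_norm_sub_le_two_mul hw ⟨g₀, hg₀K, hg₀⟩
  rw [dist_eq_norm]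
  linarith [csInf_le hT_bdd ⟨g, hgK, hg, rfl⟩]

end Rescale

section Restriction

variable {𝕜 E : Type*} [RCLike 𝕜] [NormedAddCommGroup E] [NormedSpace 𝕜 E]

theorem StrongDual.norm_comp_subtypeL_le_norm_sub {G : Submodule 𝕜 E} (f : StrongDual 𝕜 E)
    {w : StrongDual 𝕜 E} (hw : w ∈ StrongDual.polarSubmodule 𝕜 G) :
    ‖f.comp G.subtypeL‖ ≤ ‖f - w‖ := by
  have : f.comp G.subtypeL = (f - w).comp G.subtypeL := by
    ext x
    simp [(StrongDual.mem_polarSubmodule 𝕜 G w).mp hw x x.2]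
  rw [this]
  exact ContinuousLinearMap.opNorm_le_bound _ (norm_nonneg _) fun x => (f - w).le_opNorm (x : E)

theorem StrongDual.exists_mem_polarSubmodule_norm_sub_eq (G : Submodule 𝕜 E)
    (f : StrongDual 𝕜 E) :
    ∃ w ∈ StrongDual.polarSubmodule 𝕜 G, ‖f - w‖ = ‖f.comp G.subtypeL‖ := by
  obtain ⟨F, hF, hFn⟩ := exists_extension_norm_eq G (f.comp G.subtypeL)
  refine ⟨f - F, (StrongDual.mem_polarSubmodule 𝕜 G _).mpr fun z hz => ?_, by simpa using hFn⟩
  simpa [sub_eq_zero] using (hF ⟨z, hz⟩).symm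

theorem StrongDual.infDist_polarSubmodule (G : Submodule 𝕜 E) (f : StrongDual 𝕜 E) :
    infDist f (StrongDual.polarSubmodule 𝕜 G) = ‖f.comp G.subtypeL‖ := by
  obtain ⟨w₀, hw₀, hfw₀⟩ := StrongDual.exists_mem_polarSubmodule_norm_sub_eq G f
  refine le_antisymm (hfw₀ ▸ dist_eq_norm f w₀ ▸ infDist_le_dist_of_mem hw₀) ?_
  refine (le_infDist ⟨w₀, hw₀⟩).mpr fun w hw => ?_
  rw [dist_eq_norm]
  exact f.norm_comp_subtypeL_le_norm_sub hw

end Restriction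

theorem Submodule.sSup_abs_apply_eq_norm_comp_subtypeL {E : Type*} [NormedAddCommGroup E]
    [NormedSpace ℝ E] (G : Submodule ℝ E) (f : StrongDual ℝ E) :
    sSup {r : ℝ | ∃ z ∈ G, ‖z‖ ≤ 1 ∧ r = |f z|} = ‖f.comp G.subtypeL‖ := by
  rw [← ContinuousLinearMap.sSup_unitClosedBall_eq_norm]
  congr 1
  ext r
  simp only [Set.mem_ofPred_eq, Set.mem_image, mem_closedBall_zero_iff, Real.norm_eq_abs]
  constructor
  · rintro ⟨z, hz, hz1, rfl⟩
    exact ⟨⟨z, hz⟩, hz1, rfl⟩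
  · rintro ⟨⟨z, hz⟩, hz1, rfl⟩
    exact ⟨z, hz, hz1, rfl⟩

theorem stmt5_general (Z : Type*) [NormedAddCommGroup Z] [NormedSpace ℝ Z]
    (G : Submodule ℝ Z) (f : StrongDual ℝ Z) :
    Metric.infDist f {g : StrongDual ℝ Z | ∀ z ∈ G, g z = 0} =
      sSup {r : ℝ | ∃ z ∈ G, ‖z‖ ≤ 1 ∧ r = |f z|} ∧
    (1 / 2) * sInf {r : ℝ | ∃ g : StrongDual ℝ Z,
        (∀ z ∈ G, g z = 0) ∧ ‖g‖ = ‖f‖ ∧ r = ‖f - g‖} ≤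
      Metric.infDist f {g : StrongDual ℝ Z | ∀ z ∈ G, g z = 0} := by
  rw [← StrongDual.polarSubmodule_eq_setOfPred, StrongDual.infDist_polarSubmodule]
  refine ⟨(G.sSup_abs_apply_eq_norm_comp_subtypeL f).symm, ?_⟩
  have h := (StrongDual.polarSubmodule ℝ G).sInf_norm_sub_of_norm_eq_le_two_mul_infDist f
  simp_rw [StrongDual.infDist_polarSubmodule, StrongDual.mem_polarSubmodule] at h
  linarith

/-- For a real Banach space `Z`, a subspace `G ⊆ Z` and `z* ∈ Z*`:
`dist(z*, G^⊥) = sup { |z*(z)| : z ∈ G, ‖z‖ ≤ 1 }`, and moreover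
`dist(z*, G^⊥) ≥ (1/2) · inf { ‖z* - w*‖ : w* ∈ G^⊥, ‖w*‖ = ‖z*‖ }`. -/
theorem stmt5 (Z : Type*) [NormedAddCommGroup Z] [NormedSpace ℝ Z] [CompleteSpace Z]
    (G : Submodule ℝ Z) (f : StrongDual ℝ Z) :
    Metric.infDist f {g : StrongDual ℝ Z | ∀ z ∈ G, g z = 0} =
      sSup {r : ℝ | ∃ z ∈ G, ‖z‖ ≤ 1 ∧ r = |f z|} ∧
    (1 / 2) * sInf {r : ℝ | ∃ g : StrongDual ℝ Z,
        (∀ z ∈ G, g z = 0) ∧ ‖g‖ = ‖f‖ ∧ r = ‖f - g‖} ≤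
      Metric.infDist f {g : StrongDual ℝ Z | ∀ z ∈ G, g z = 0} :=
  stmt5_general Z G f
end

section
/- Let (Ω, μ) be a σ-finite measure space and 1 < p < ∞. For f ∈ L_{p,∞}(μ), define |||f|||_{p,∞} = sup{ μ(A)^{1/p − 1} ∫_A |f| dμ : A measurable, 0 < μ(A) < ∞ }. Then for any f₁, …, fₙ ∈ L_{p,∞}(μ), one has ||| ⋁_{i=1}^n |f_i| |||_{p,∞} ≤ (Σ_{i=1}^n |||f_i|||_{p,∞}^p)^{1/p}; i.e., (L_{p,∞}, |||·|||_{p,∞}) satisfies an upper p-estimate with constant 1. -/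
open MeasureTheory ENNReal

/-- The norm `|||f|||_{p,∞} = sup { μ(A)^{1/p - 1} ∫_A |f| dμ : 0 < μ(A) < ∞ }` on the
weak `L_p` space. -/
noncomputable def weakLpNorm {Ω : Type*} [MeasurableSpace Ω] (μ : Measure Ω)
    (p : ℝ) (f : Ω → ℝ) : ℝ :=
  sSup {r : ℝ | ∃ A : Set Ω, MeasurableSet A ∧ 0 < μ A ∧ μ A ≠ ⊤ ∧
    r = (μ A).toReal ^ (1 / p - 1) * ∫ x in A, |f x| ∂μ}

open Set in

lemma weakLp_setIntegral_bound {Ω : Type*} [MeasurableSpace Ω] (μ : Measure Ω) {p : ℝ}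
    (hp : 1 < p) {f : Ω → ℝ} (hf : Measurable f) {c : ℝ≥0∞} (hc0 : c ≠ 0) (hcT : c ≠ ⊤)
    (hw : ∀ t : ℝ, 0 < t → ENNReal.ofReal t ^ p * μ {x | t < |f x|} ≤ c)
    {A : Set Ω} (h0 : 0 < μ A) (hfin : μ A ≠ ⊤) :
    (μ A).toReal ^ (1 / p - 1) * ∫ x in A, |f x| ∂μ ≤ c.toReal ^ (1 / p) * (p / (p - 1)) := by
  have hp0 : (0:ℝ) < p := by linarith
  set m : ℝ := (μ A).toReal with hm_def
  have hm : 0 < m := ENNReal.toReal_pos h0.ne' hfin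
  have hc' : 0 < c.toReal := ENNReal.toReal_pos hc0 hcT
  set u : ℝ := c.toReal ^ (1 / p) with hu_def
  have hu : 0 < u := Real.rpow_pos_of_pos hc' _
  set T : ℝ := u / m ^ (1 / p) with hT_def
  have hmp : 0 < m ^ (1/p) := Real.rpow_pos_of_pos hm _
  have hT : 0 < T := div_pos hu hmp
  -- rewrite Bochner integral as lintegral
  rw [integral_eq_lintegral_of_nonneg_ae (Filter.Eventually.of_forall fun x => abs_nonneg _)
    (hf.abs.aestronglyMeasurable)]
  set I : ℝ≥0∞ := ∫⁻ x in A, ENNReal.ofReal |f x| ∂μ with hI_def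
  have layer : I = ∫⁻ t in Ioi (0:ℝ), (μ.restrict A) {x | t < |f x|} :=
    lintegral_eq_lintegral_meas_lt _ (Filter.Eventually.of_forall fun x => abs_nonneg _)
      hf.abs.aemeasurable
  have key : I ≤ μ A * ENNReal.ofReal T + c * ENNReal.ofReal (T ^ (1 - p) / (p - 1)) := by
    rw [layer, ← Ioc_union_Ioi_eq_Ioi hT.le,
      lintegral_union measurableSet_Ioi (Ioc_disjoint_Ioi le_rfl)]
    have piece1 : ∫⁻ t in Ioc (0:ℝ) T, (μ.restrict A) {x | t < |f x|} ≤ μ A * ENNReal.ofReal T := by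
      calc ∫⁻ t in Ioc (0:ℝ) T, (μ.restrict A) {x | t < |f x|}
          ≤ ∫⁻ _ in Ioc (0:ℝ) T, μ A := by
            refine lintegral_mono fun t => ?_
            exact le_trans (measure_mono (subset_univ _)) (le_of_eq (Measure.restrict_apply_univ _))
        _ = μ A * ENNReal.ofReal T := by
            rw [setLIntegral_const, Real.volume_Ioc, sub_zero]
    have meas2 : Measurable fun t : ℝ => c * ENNReal.ofReal (t ^ (-p)) :=
      ((measurable_id.pow_const _).ennreal_ofReal).const_mul c
    have piece2 : ∫⁻ t in Ioi T, (μ.restrict A) {x | t < |f x|}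
        ≤ c * ENNReal.ofReal (T ^ (1 - p) / (p - 1)) := by
      calc ∫⁻ t in Ioi T, (μ.restrict A) {x | t < |f x|}
          ≤ ∫⁻ t in Ioi T, c * ENNReal.ofReal (t ^ (-p)) := by
            refine setLIntegral_mono meas2 fun t ht => ?_
            have ht0 : 0 < t := hT.trans ht
            have hb0 : ENNReal.ofReal t ^ p ≠ 0 := by
              simp [ENNReal.rpow_eq_zero_iff, ENNReal.ofReal_eq_zero, not_le, ht0, hp0,
                ENNReal.ofReal_ne_top]
            have hbT : ENNReal.ofReal t ^ p ≠ ⊤ := by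
              exact (ENNReal.rpow_lt_top_of_nonneg hp0.le ENNReal.ofReal_ne_top).ne
            have h1 : (μ.restrict A) {x | t < |f x|} ≤ c / ENNReal.ofReal t ^ p := by
              rw [ENNReal.le_div_iff_mul_le (Or.inl hb0) (Or.inl hbT), mul_comm]
              exact le_trans (mul_le_mul_right (Measure.restrict_apply_le _ _) _) (hw t ht0)
            refine h1.trans (le_of_eq ?_)
            rw [div_eq_mul_inv, ENNReal.ofReal_rpow_of_pos ht0,
              ← ENNReal.ofReal_inv_of_pos (Real.rpow_pos_of_pos ht0 _),
              ← Real.rpow_neg ht0.le]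
        _ = c * ENNReal.ofReal (T ^ (1 - p) / (p - 1)) := by
            rw [lintegral_const_mul _ (show Measurable fun t : ℝ => ENNReal.ofReal (t ^ (-p)) by fun_prop)]
            congr 1
            rw [← ofReal_integral_eq_lintegral_ofReal
              (integrableOn_Ioi_rpow_of_lt (by linarith : -p < -1) hT)
              ((ae_restrict_mem measurableSet_Ioi).mono fun t ht =>
                Real.rpow_nonneg (hT.trans ht).le _)]
            rw [integral_Ioi_rpow_of_lt (by linarith : -p < -1) hT]
            congr 1
            rw [show (-p + 1 : ℝ) = -(p-1) by ring, show (1 - p : ℝ) = -(p-1) by ring]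
            rw [neg_div_neg_eq]
    exact add_le_add piece1 piece2
  have hBne : μ A * ENNReal.ofReal T + c * ENNReal.ofReal (T ^ (1 - p) / (p - 1)) ≠ ⊤ :=
    ENNReal.add_ne_top.2 ⟨ENNReal.mul_ne_top hfin ENNReal.ofReal_ne_top,
      ENNReal.mul_ne_top hcT ENNReal.ofReal_ne_top⟩
  have hIle : I.toReal ≤ m * T + c.toReal * (T ^ (1 - p) / (p - 1)) := by
    refine (ENNReal.toReal_mono hBne key).trans (le_of_eq ?_)
    rw [ENNReal.toReal_add (ENNReal.mul_ne_top hfin ENNReal.ofReal_ne_top)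
      (ENNReal.mul_ne_top hcT ENNReal.ofReal_ne_top), ENNReal.toReal_mul, ENNReal.toReal_mul,
      ENNReal.toReal_ofReal hT.le,
      ENNReal.toReal_ofReal (div_nonneg (Real.rpow_nonneg hT.le _) (by linarith))]
  have hfinal : m ^ (1/p - 1) * (m * T + c.toReal * (T ^ (1 - p) / (p - 1)))
      = c.toReal ^ (1/p) * (p / (p - 1)) := by
    have e0 : ∀ a b : ℝ, m ^ a * m ^ b = m ^ (a + b) := fun a b => (Real.rpow_add hm a b).symm
    have eT : T ^ (1 - p) = u ^ (1 - p) / m ^ (1/p - 1) := by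
      rw [hT_def, Real.div_rpow hu.le hmp.le, ← Real.rpow_mul hm.le]
      congr 2
      field_simp
    have eu : u ^ (1 - p) = c.toReal ^ (1/p - 1) := by
      rw [hu_def, ← Real.rpow_mul hc'.le]
      congr 1
      field_simp
    have ec : c.toReal * c.toReal ^ (1/p - 1) = u := by
      nth_rewrite 1 [← Real.rpow_one c.toReal]
      rw [← Real.rpow_add hc']
      rw [hu_def]
      norm_num
    have em1 : m ^ (1/p - 1) * m = m ^ (1/p) := by
      nth_rewrite 2 [← Real.rpow_one m]
      rw [e0]; norm_num
    have em2 : m ^ (1/p) / m ^ (1/p) = 1 := div_self hmp.ne'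
    -- expand
    rw [eT, eu, mul_add]
    rw [show m ^ (1/p-1) * (m * T) = (m ^ (1/p-1) * m) * T by ring, em1, hT_def]
    rw [show m ^ (1/p) * (u / m ^ (1/p)) = u * (m ^ (1/p) / m ^ (1/p)) by ring, em2, mul_one]
    have hm1p : m ^ (1/p - 1) ≠ 0 := (Real.rpow_pos_of_pos hm _).ne'
    rw [show m ^ (1/p-1) * (c.toReal * (c.toReal ^ (1/p-1) / m ^ (1/p-1) / (p-1)))
        = (c.toReal * c.toReal ^ (1/p-1)) * (m ^ (1/p-1) / m ^ (1/p-1)) / (p-1) by ring,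
      div_self hm1p, mul_one, ec]
    rw [← hu_def]
    have h1 : p - 1 ≠ 0 := by linarith
    field_simp
    ring
  calc m ^ (1/p - 1) * I.toReal
      ≤ m ^ (1/p - 1) * (m * T + c.toReal * (T ^ (1 - p) / (p - 1))) := by
        exact mul_le_mul_of_nonneg_left hIle (Real.rpow_nonneg ENNReal.toReal_nonneg _)
    _ = c.toReal ^ (1/p) * (p / (p - 1)) := hfinal

open Set in
/-- For a σ-finite measure `μ` and `1 < p < ∞`, the weak `L_p` space with the norm
`|||·|||_{p,∞}` satisfies an upper `p`-estimate with constant `1`: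
`||| ⋁ᵢ |fᵢ| |||_{p,∞} ≤ (∑ᵢ |||fᵢ|||_{p,∞}^p)^{1/p}` for `f₁, …, fₙ ∈ L_{p,∞}(μ)`. -/
theorem stmt9 {Ω : Type*} [MeasurableSpace Ω] (μ : Measure Ω) [SigmaFinite μ]
    (p : ℝ) (hp : 1 < p) (n : ℕ) (f : Fin n → Ω → ℝ)
    (hmeas : ∀ i, Measurable (f i))
    (hweak : ∀ i, ∃ C : ℝ≥0∞, C ≠ ⊤ ∧ ∀ t : ℝ, 0 < t →
      ENNReal.ofReal t ^ p * μ {x | t < |f i x|} ≤ C) :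
    weakLpNorm μ p (fun x => ⨆ i, |f i x|) ≤
      (∑ i, weakLpNorm μ p (f i) ^ p) ^ (1 / p) := by
  classical
  have hp0 : (0:ℝ) < p := lt_trans one_pos hp
  have hSnn : ∀ i, 0 ≤ weakLpNorm μ p (f i) := by
    intro i
    apply Real.sSup_nonneg
    rintro r ⟨A, hA, h0, hfin, rfl⟩
    exact mul_nonneg (Real.rpow_nonneg ENNReal.toReal_nonneg _)
      (integral_nonneg fun x => abs_nonneg _)
  have hRHSnn : 0 ≤ (∑ i, weakLpNorm μ p (f i) ^ p) ^ (1/p) :=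
    Real.rpow_nonneg (Finset.sum_nonneg fun i _ => Real.rpow_nonneg (hSnn i) _) _
  obtain hn | hn := Nat.eq_zero_or_pos n
  · subst hn
    apply Real.sSup_le _ hRHSnn
    rintro r ⟨A, hA, h0, hfin, rfl⟩
    have hz : ∀ x : Ω, (⨆ i, |f i x|) = (0:ℝ) := fun x => Real.iSup_of_isEmpty _
    simp only [hz, abs_zero, integral_zero, mul_zero]
    exact hRHSnn
  · haveI : Nonempty (Fin n) := Fin.pos_iff_nonempty.mp hn
    -- constants
    choose C hCT hCw using hweak
    set c : Fin n → ℝ≥0∞ := fun i => C i + 1 with hc_def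
    have hc1 : ∀ i, (1:ℝ≥0∞) ≤ c i := fun i => le_add_self
    have hc0 : ∀ i, c i ≠ 0 := fun i => (lt_of_lt_of_le zero_lt_one (hc1 i)).ne'
    have hcT : ∀ i, c i ≠ ⊤ := fun i => ENNReal.add_ne_top.2 ⟨hCT i, ENNReal.one_ne_top⟩
    have hcw : ∀ i, ∀ t : ℝ, 0 < t → ENNReal.ofReal t ^ p * μ {x | t < |f i x|} ≤ c i :=
      fun i t ht => (hCw i t ht).trans le_self_add
    have hbddS : ∀ i, BddAbove {r : ℝ | ∃ A : Set Ω, MeasurableSet A ∧ 0 < μ A ∧ μ A ≠ ⊤ ∧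
        r = (μ A).toReal ^ (1 / p - 1) * ∫ x in A, |f i x| ∂μ} := by
      intro i
      refine ⟨(c i).toReal ^ (1/p) * (p/(p-1)), ?_⟩
      rintro r ⟨B, hB, h0B, hfinB, rfl⟩
      exact weakLp_setIntegral_bound μ hp (hmeas i) (hc0 i) (hcT i) (hcw i) h0B hfinB
    apply Real.sSup_le _ hRHSnn
    rintro r ⟨A, hA, h0, hfin, rfl⟩
    set g : Ω → ℝ := fun x => ⨆ i, |f i x| with hg_def
    have hbdd : ∀ x : Ω, BddAbove (Set.range fun i => |f i x|) :=
      fun x => Set.Finite.bddAbove (Set.finite_range _)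
    have hge : ∀ x i, |f i x| ≤ g x := fun x i => le_ciSup (hbdd x) i
    have hgnn : ∀ x, 0 ≤ g x :=
      fun x => le_trans (abs_nonneg (f (Classical.arbitrary _) x)) (hge x _)
    have habs : ∀ x, |g x| = g x := fun x => abs_of_nonneg (hgnn x)
    have hgm : Measurable g := by
      have h1 : Measurable (Finset.univ.sup' Finset.univ_nonempty
          fun i => fun x : Ω => |f i x|) :=
        Finset.measurable_sup' _ fun i _ => (hmeas i).abs
      have h2 : g = Finset.univ.sup' Finset.univ_nonempty fun i => fun x : Ω => |f i x| := by
        funext x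
        rw [hg_def]
        rw [Finset.sup'_apply, Finset.sup'_univ_eq_ciSup]
      rw [h2]; exact h1
    -- decomposition
    set E : Fin n → Set Ω := fun i => A ∩ {x | g x ≤ |f i x|} with hE_def
    have hEm : ∀ i, MeasurableSet (E i) := fun i => hA.inter (measurableSet_le hgm (hmeas i).abs)
    set D : Fin n → Set Ω := fun i => E i \ ⋃ j, ⋃ (_ : j < i), E j with hD_def
    have hDm : ∀ i, MeasurableSet (D i) := fun i =>
      (hEm i).diff (MeasurableSet.iUnion fun j => MeasurableSet.iUnion fun _ => hEm j)
    have hDE : ∀ i, D i ⊆ E i := fun i => diff_subset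
    have hDA : ∀ i, D i ⊆ A := fun i => (hDE i).trans inter_subset_left
    have hdisj : ∀ i j : Fin n, i ≠ j → Disjoint (D i) (D j) := by
      have key : ∀ i j : Fin n, i < j → Disjoint (D i) (D j) := by
        intro i j hij
        refine Set.disjoint_left.mpr fun x hxi hxj => ?_
        exact hxj.2 (Set.mem_iUnion.mpr ⟨i, Set.mem_iUnion.mpr ⟨hij, hDE i hxi⟩⟩)
      intro i j hij
      rcases lt_or_gt_of_ne hij with h | h
      · exact key i j h
      · exact (key j i h).symm
    have hcover : ⋃ i, D i = A := by
      apply Set.Subset.antisymm (Set.iUnion_subset fun i => hDA i)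
      intro x hx
      have hex : ∃ i, g x ≤ |f i x| := by
        obtain ⟨i, hi⟩ := exists_eq_ciSup_of_finite (f := fun i => |f i x|)
        exact ⟨i, le_of_eq hi.symm⟩
      let s : Finset (Fin n) := Finset.univ.filter fun i => g x ≤ |f i x|
      have hs : s.Nonempty := ⟨hex.choose, by
        simp only [s, Finset.mem_filter, Finset.mem_univ, true_and]
        exact hex.choose_spec⟩
      set i0 := s.min' hs with hi0_def
      have hi0 : g x ≤ |f i0 x| := (Finset.mem_filter.mp (s.min'_mem hs)).2
      refine Set.mem_iUnion.mpr ⟨i0, ⟨⟨hx, hi0⟩, ?_⟩⟩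
      intro hmem
      obtain ⟨j, hj⟩ := Set.mem_iUnion.mp hmem
      obtain ⟨hji, hxj⟩ := Set.mem_iUnion.mp hj
      have : i0 ≤ j := Finset.min'_le s j
        (Finset.mem_filter.mpr ⟨Finset.mem_univ _, hxj.2⟩)
      exact absurd hji (not_lt.mpr this)
    have hgoal_int : ∫ x in A, |g x| ∂μ = ∫ x in A, g x ∂μ := by simp only [habs]
    show (μ A).toReal ^ (1/p - 1) * ∫ x in A, |g x| ∂μ
        ≤ (∑ i, weakLpNorm μ p (f i) ^ p) ^ (1/p)
    rw [hgoal_int]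
    by_cases hint : IntegrableOn g A μ
    swap
    · rw [integral_undef hint, mul_zero]
      exact hRHSnn
    have hsplit : ∫ x in A, g x ∂μ = ∑ i, ∫ x in D i, g x ∂μ := by
      conv_lhs => rw [← hcover]
      rw [show (⋃ i, D i) = ⋃ i ∈ Finset.univ, D i by simp]
      exact integral_biUnion_finset Finset.univ (fun i _ => hDm i)
        (fun i _ j _ hij => hdisj i j hij)
        (fun i _ => hint.mono_set (hDA i))
    have hDfin : ∀ i, μ (D i) ≠ ⊤ :=
      fun i => (lt_of_le_of_lt (measure_mono (hDA i)) hfin.lt_top).ne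
    have hstep : ∀ i, ∫ x in D i, g x ∂μ
        ≤ weakLpNorm μ p (f i) * (μ (D i)).toReal ^ (1 - 1/p) := by
      intro i
      have heq : ∫ x in D i, g x ∂μ = ∫ x in D i, |f i x| ∂μ :=
        setIntegral_congr_fun (hDm i) fun x hx => le_antisymm ((hDE i hx).2) (hge x i)
      rcases eq_or_ne (μ (D i)) 0 with hz | hz
      · rw [heq, Measure.restrict_eq_zero.mpr hz, integral_zero_measure]
        exact mul_nonneg (hSnn i) (Real.rpow_nonneg ENNReal.toReal_nonneg _)
      · have hmem : (μ (D i)).toReal ^ (1/p - 1) * ∫ x in D i, |f i x| ∂μ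
            ∈ {r : ℝ | ∃ B : Set Ω, MeasurableSet B ∧ 0 < μ B ∧ μ B ≠ ⊤ ∧
              r = (μ B).toReal ^ (1 / p - 1) * ∫ x in B, |f i x| ∂μ} :=
          ⟨D i, hDm i, pos_iff_ne_zero.mpr hz, hDfin i, rfl⟩
        have hle : (μ (D i)).toReal ^ (1/p - 1) * ∫ x in D i, |f i x| ∂μ
            ≤ weakLpNorm μ p (f i) := le_csSup (hbddS i) hmem
        have hd : 0 < (μ (D i)).toReal := ENNReal.toReal_pos hz (hDfin i)
        have hco : (μ (D i)).toReal ^ (1 - 1/p) * (μ (D i)).toReal ^ (1/p - 1) = 1 := by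
          rw [← Real.rpow_add hd]
          norm_num
        calc ∫ x in D i, g x ∂μ
            = (μ (D i)).toReal ^ (1-1/p) *
              ((μ (D i)).toReal ^ (1/p-1) * ∫ x in D i, |f i x| ∂μ) := by
              rw [heq, ← mul_assoc, hco, one_mul]
          _ ≤ (μ (D i)).toReal ^ (1-1/p) * weakLpNorm μ p (f i) :=
              mul_le_mul_of_nonneg_left hle (Real.rpow_nonneg hd.le _)
          _ = weakLpNorm μ p (f i) * (μ (D i)).toReal ^ (1-1/p) := mul_comm _ _
    have hq : Real.HolderConjugate p (p/(p-1)) :=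
      (Real.holderConjugate_iff_eq_conjExponent hp).mpr rfl
    have hbq : ∀ i : Fin n, ((μ (D i)).toReal ^ (1 - 1/p)) ^ (p/(p-1)) = (μ (D i)).toReal := by
      intro i
      rw [← Real.rpow_mul ENNReal.toReal_nonneg,
        show (1 - 1/p) * (p/(p-1)) = 1 by
          have h1 : p - 1 ≠ 0 := by linarith
          have h2 : p ≠ 0 := by linarith
          field_simp,
        Real.rpow_one]
    have hhold : ∑ i, weakLpNorm μ p (f i) * (μ (D i)).toReal ^ (1 - 1/p)
        ≤ (∑ i, weakLpNorm μ p (f i) ^ p) ^ (1/p)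
          * (∑ i, (μ (D i)).toReal) ^ (1/(p/(p-1))) := by
      have h := Real.inner_le_Lp_mul_Lq_of_nonneg (s := Finset.univ) hq
        (f := fun i => weakLpNorm μ p (f i)) (g := fun i => (μ (D i)).toReal ^ (1 - 1/p))
        (fun i _ => hSnn i) (fun i _ => Real.rpow_nonneg ENNReal.toReal_nonneg _)
      simpa only [hbq] using h
    have hsum : ∑ i, (μ (D i)).toReal = (μ A).toReal := by
      rw [← ENNReal.toReal_sum (fun i _ => hDfin i)]
      congr 1
      rw [← measure_biUnion_finset ?hd (fun i _ => hDm i)]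
      · congr 1
        simpa using hcover
      · intro i _ j _ hij
        exact hdisj i j hij
    have h1q : 1/(p/(p-1)) = 1 - 1/p := by
      have h1 : p - 1 ≠ 0 := by linarith
      have h2 : p ≠ 0 := by linarith
      field_simp
    rw [hsum, h1q] at hhold
    have hmA : 0 < (μ A).toReal := ENNReal.toReal_pos h0.ne' hfin
    calc (μ A).toReal ^ (1/p-1) * ∫ x in A, g x ∂μ
        ≤ (μ A).toReal ^ (1/p-1) * ((∑ i, weakLpNorm μ p (f i) ^ p) ^ (1/p)
            * (μ A).toReal ^ (1-1/p)) := by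
          refine mul_le_mul_of_nonneg_left ?_ (Real.rpow_nonneg ENNReal.toReal_nonneg _)
          rw [hsplit]
          exact le_trans (Finset.sum_le_sum fun i _ => hstep i) hhold
      _ = (∑ i, weakLpNorm μ p (f i) ^ p) ^ (1/p) := by
          rw [show (μ A).toReal ^ (1/p-1) * ((∑ i, weakLpNorm μ p (f i) ^ p) ^ (1/p)
              * (μ A).toReal ^ (1-1/p))
            = (∑ i, weakLpNorm μ p (f i) ^ p) ^ (1/p)
              * ((μ A).toReal ^ (1/p-1) * (μ A).toReal ^ (1-1/p)) by ring,
            ← Real.rpow_add hmA]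
          norm_num
end

section
/- Let n be an even positive integer and let (a_i)_{i=1}^∞ be a real sequence with Σ_{i=1}^∞ |a_i| ≤ 1. Then | Σ_{k=1}^n (−1)^k · |Σ_{i=1}^k a_i| | ≤ 1. (In the language of free Banach lattices: ‖Σ_{k=1}^n (−1)^k |δ_{s_k}|‖_{FBL^{(∞)}[c₀]} ≤ 1, where (s_k) is the summing basis of c₀.) -/
/-!
Grouping the terms of the alternating sum in consecutive pairs `(2j+1, 2j+2)` turns it into
`∑ⱼ (|S₂ⱼ₊₂| - |S₂ⱼ₊₁|)`, where `Sₖ = ∑_{i<k} aᵢ`. Since `S₂ⱼ₊₂ = S₂ⱼ₊₁ + a₂ⱼ₊₁`, the reverse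
triangle inequality bounds the `j`-th pair by `|a₂ⱼ₊₁|`, and these are distinct terms of `∑ |aᵢ|`.
-/

open Finset

theorem sum_Icc_one_two_mul_neg_one_pow_mul {R : Type*} [CommRing R] (f : ℕ → R) (m : ℕ) :
    ∑ k ∈ Icc 1 (2 * m), (-1 : R) ^ k * f k = ∑ j ∈ range m, (f (2 * j + 2) - f (2 * j + 1)) := by
  induction m with
  | zero => simp
  | succ m ih =>
    rw [show 2 * (m + 1) = 2 * m + 1 + 1 by ring, sum_Icc_succ_top (by omega),
      sum_Icc_succ_top (by omega), ih, sum_range_succ, (odd_two_mul_add_one m).neg_one_pow,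
      pow_succ, (odd_two_mul_add_one m).neg_one_pow]
    ring

theorem abs_abs_sum_range_succ_sub_abs_sum_range_le {α : Type*} [AddCommGroup α] [LinearOrder α]
    [IsOrderedAddMonoid α] (a : ℕ → α) (k : ℕ) :
    |(|∑ i ∈ range (k + 1), a i| - |∑ i ∈ range k, a i|)| ≤ |a k| := by
  simpa only [sum_range_succ_sub_sum] using
    abs_abs_sub_abs_le_abs_sub (∑ i ∈ range (k + 1), a i) (∑ i ∈ range k, a i)

theorem Summable.sum_comp_le_tsum_of_injective {ι κ α : Type*} [AddCommMonoid α] [Preorder α]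
    [IsOrderedAddMonoid α] [TopologicalSpace α] [OrderClosedTopology α] {g : κ → α}
    (hg : Summable g)
    (hg₀ : ∀ i, 0 ≤ g i) {e : ι → κ} (he : Function.Injective e) (s : Finset ι) :
    ∑ j ∈ s, g (e j) ≤ ∑' i, g i := by
  classical
  rw [← sum_image he.injOn]
  exact hg.sum_le_tsum _ fun i _ => hg₀ i

theorem stmt11_general (n : ℕ) (hne : Even n) (a : ℕ → ℝ)
    (hsum : Summable fun i => |a i|) (h1 : (∑' i, |a i|) ≤ 1) :
    abs (∑ k ∈ Finset.Icc 1 n, (-1 : ℝ) ^ k * |∑ i ∈ Finset.range k, a i|) ≤ 1 := by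
  obtain ⟨m, rfl⟩ := hne
  rw [← two_mul, sum_Icc_one_two_mul_neg_one_pow_mul]
  calc _ ≤ ∑ j ∈ range m,
          |(|∑ i ∈ range (2 * j + 1 + 1), a i| - |∑ i ∈ range (2 * j + 1), a i|)| :=
        abs_sum_le_sum_abs _ _
    _ ≤ ∑ j ∈ range m, |a (2 * j + 1)| :=
        sum_le_sum fun j _ => abs_abs_sum_range_succ_sub_abs_sum_range_le a _
    _ ≤ ∑' i, |a i| :=
        hsum.sum_comp_le_tsum_of_injective (fun i => abs_nonneg _)
          (fun x y h => by simpa using h) _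
    _ ≤ 1 := h1

/-- Let `n` be an even positive integer and `(aᵢ)` a real sequence with `∑ |aᵢ| ≤ 1`.
Then `|∑_{k=1}^n (-1)^k |∑_{i=1}^k aᵢ|| ≤ 1` (the `FBL^(∞)[c₀]`-estimate for alternating
sums of moduli of the summing basis). -/
theorem stmt11 (n : ℕ) (hn : 0 < n) (hne : Even n) (a : ℕ → ℝ)
    (hsum : Summable fun i => |a i|) (h1 : (∑' i, |a i|) ≤ 1) :
    abs (∑ k ∈ Finset.Icc 1 n, (-1 : ℝ) ^ k * |∑ i ∈ Finset.range k, a i|) ≤ 1 :=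
  stmt11_general n hne a hsum h1
end

section
/- Let e₁, e₂ be the canonical basis of ℓ₂² (ℝ² with the Euclidean norm). Then sup{ Σ_{j=1}^m | |x_j*(e₁)| − |x_j*(e₂)| | : m ∈ ℕ, x₁*,…,x_m* ∈ (ℓ₂²)*, sup_{x ∈ B_{ℓ₂²}} Σ_{j=1}^m |x_j*(x)| ≤ 1 } = √2. (In the language of free Banach lattices: ‖ |δ_{e₁}| − |δ_{e₂}| ‖_{FBL[ℓ₂²]} = √2.) -/
/-!
Testing the constraint at the unit vector `(1, -1)/√2` gives `∑ |a j - b j| ≤ √2`, which dominates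
`∑ ||a j| - |b j||`. Equality is attained by the two coordinate functionals scaled by `1/√2`: for
them the constraint reads `|u| + |v| ≤ √2` on the unit disc, i.e. Cauchy–Schwarz.
-/

open Real

lemma abs_add_abs_le_sqrt_two {u v : ℝ} (huv : u ^ 2 + v ^ 2 ≤ 1) : |u| + |v| ≤ √2 := by
  apply Real.le_sqrt_of_sq_le
  nlinarith [sq_abs u, sq_abs v, sq_nonneg (|u| - |v|)]

lemma sum_abs_sub_abs_le_sqrt_two {ι : Type*} [Fintype ι] (a b : ι → ℝ)
    (hab : ∀ u v : ℝ, u ^ 2 + v ^ 2 ≤ 1 → ∑ j, |a j * u + b j * v| ≤ 1) :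
    ∑ j, |(|a j| - |b j|)| ≤ √2 := by
  have hs : (0 : ℝ) < √2 := by positivity
  have hunit : (√2)⁻¹ ^ 2 + (-(√2)⁻¹) ^ 2 ≤ 1 := by
    rw [neg_sq, inv_pow, Real.sq_sqrt zero_le_two]; norm_num
  have hdiag : ∀ j, |a j - b j| = √2 * |a j * (√2)⁻¹ + b j * (-(√2)⁻¹)| := fun j => by
    rw [← abs_of_pos hs, ← abs_mul, abs_of_pos hs]
    congr 1
    field_simp
    ring
  calc ∑ j, |(|a j| - |b j|)|
      ≤ ∑ j, |a j - b j| := Finset.sum_le_sum fun j _ => abs_abs_sub_abs_le_abs_sub _ _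
    _ = √2 * ∑ j, |a j * (√2)⁻¹ + b j * (-(√2)⁻¹)| := by simp only [hdiag, Finset.mul_sum]
    _ ≤ √2 * 1 := mul_le_mul_of_nonneg_left (hab _ _ hunit) hs.le
    _ = √2 := mul_one _

lemma sum_abs_coord_div_sqrt_two_le_one {u v : ℝ} (huv : u ^ 2 + v ^ 2 ≤ 1) :
    ∑ j, |![(√2)⁻¹, 0] j * u + ![0, (√2)⁻¹] j * v| ≤ 1 := by
  have hs : (0 : ℝ) < √2 := by positivity
  simp only [Fin.sum_univ_two, Matrix.cons_val_zero, Matrix.cons_val_one, zero_mul,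
    add_zero, zero_add, abs_mul, abs_inv, abs_of_pos hs]
  rw [← mul_add, inv_mul_le_iff₀ hs, mul_one]
  exact abs_add_abs_le_sqrt_two huv

/-- Identifying `(ℓ₂²)* = ℝ²` via the Euclidean inner product (so `x_j* = (a_j, b_j)`,
`x_j*(e₁) = a_j`, `x_j*(e₂) = b_j`), the `FBL[ℓ₂²]`-norm of `|δ_{e₁}| - |δ_{e₂}|`, namely
`sup { ∑_j ||a_j| - |b_j|| : sup_{u²+v²≤1} ∑_j |a_j u + b_j v| ≤ 1 }`, equals `√2`. -/
theorem stmt13 :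
    sSup {r : ℝ | ∃ (m : ℕ) (a b : Fin m → ℝ),
      (∀ u v : ℝ, u ^ 2 + v ^ 2 ≤ 1 → ∑ j, |a j * u + b j * v| ≤ 1) ∧
      r = ∑ j, abs (|a j| - |b j|)} = Real.sqrt 2 := by
  refine IsGreatest.csSup_eq ⟨⟨2, ![(√2)⁻¹, 0], ![0, (√2)⁻¹],
    fun u v => sum_abs_coord_div_sqrt_two_le_one, ?_⟩, ?_⟩
  · have hs : (0 : ℝ) < √2 := by positivity
    simp only [Fin.sum_univ_two, Matrix.cons_val_zero, Matrix.cons_val_one, abs_zero,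
      sub_zero, zero_sub, abs_neg, abs_inv, abs_of_pos hs]
    rw [← two_mul, ← div_eq_mul_inv, Real.div_sqrt]
  · rintro r ⟨m, a, b, hab, rfl⟩
    exact sum_abs_sub_abs_le_sqrt_two a b hab
end

section
/- (Tong's diagonalization) Let E = ℝ^N equipped with a norm for which the standard basis is 1-unconditional, let 1 ≤ p ≤ ∞, and let T : E → ℓ_p^N be a linear operator given by an N×N real matrix (t_{ij}). Let T' be the diagonal operator with matrix diag(t_{11}, …, t_{NN}). Then ‖T'‖ ≤ ‖T‖. -/
/-!
Averaging over all sign patterns `ε ∈ {±1}^N` kills the off-diagonal entries: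
`diag(t) = 2^{-N} ∑_ε D_ε t D_ε` with `D_ε = diagonal ε`. Each `D_ε` is an isometry of `ℓ_p^N`
and, by unconditionality, preserves `ν`, so every term has norm at most `‖T‖`.
The operator norms are suprema of sets of reals, so the right-hand one must be shown bounded
(an unbounded set has junk supremum `0`); this follows from `|v i| ν(e_i) ≤ ν v`,
obtained by adding `v` to its reflection through the `i`-th axis.
-/

open ENNReal Matrix WithLp

theorem PiLp.norm_toLp_congr {ι : Type*} [Fintype ι] {β : ι → Type*}
    [∀ i, SeminormedAddCommGroup (β i)] (p : ℝ≥0∞) {f g : ∀ i, β i}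
    (h : ∀ i, ‖f i‖ = ‖g i‖) : ‖toLp p f‖ = ‖toLp p g‖ := by
  rcases p.trichotomy with rfl | rfl | hp
  · simp only [PiLp.norm_eq_card, h]
  · simp only [PiLp.norm_eq_ciSup, h]
  · simp only [PiLp.norm_eq_sum hp, h]

section SignAveraging

variable {ι : Type*} [Fintype ι] [DecidableEq ι]

theorem sum_units_int_mul_units_int (i j : ι) :
    ∑ ε : ι → ℤˣ, (ε i : ℤ) * ε j = if i = j then 2 ^ Fintype.card ι else 0 := by
  split_ifs with hij
  · subst hij
    simp [← Units.val_mul, Int.units_mul_self, Fintype.card_units_int]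
  · -- flipping the sign of `ε i` permutes the sign patterns and negates every summand
    have hneg := Equiv.sum_comp (Equiv.mulLeft (Pi.mulSingle i (-1) : ι → ℤˣ))
      fun ε => (ε i : ℤ) * ε j
    simp [Ne.symm hij] at hneg
    omega

theorem sum_diagonal_mul_mul_diagonal_units_int {R : Type*} [CommRing R] (M : Matrix ι ι R) :
    ∑ ε : ι → ℤˣ, diagonal (fun i => ((ε i : ℤ) : R)) * M * diagonal (fun i => ((ε i : ℤ) : R)) =
      (2 ^ Fintype.card ι : R) • diagonal M.diag := by
  ext i j
  have horth := congrArg (Int.cast : ℤ → R) (sum_units_int_mul_units_int i j)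
  push_cast at horth
  simp only [Matrix.sum_apply, diagonal_mul, mul_diagonal, Matrix.smul_apply, diagonal_apply]
  calc ∑ ε : ι → ℤˣ, ((ε i : ℤ) : R) * M i j * ((ε j : ℤ) : R)
      = M i j * ∑ ε : ι → ℤˣ, ((ε i : ℤ) : R) * ((ε j : ℤ) : R) := by
        rw [Finset.mul_sum]
        exact Finset.sum_congr rfl fun _ _ => by ring
    _ = _ := by
        rw [horth]
        split_ifs with hij
        · subst hij; simp [mul_comm]
        · simp

theorem norm_toLp_diag_mul_le_of_units_int (p : ℝ≥0∞) [Fact (1 ≤ p)] (M : Matrix ι ι ℝ)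
    (v : ι → ℝ) {c : ℝ} (h : ∀ ε : ι → ℤˣ, ‖toLp p (M *ᵥ fun i => (ε i : ℝ) * v i)‖ ≤ c) :
    ‖toLp p (fun i => M i i * v i)‖ ≤ c := by
  set D : (ι → ℤˣ) → Matrix ι ι ℝ := fun ε => diagonal fun i => ((ε i : ℤ) : ℝ)
  have h2 : (0 : ℝ) < 2 ^ Fintype.card ι := by positivity
  have hdiag : (fun i => M i i * v i) =
      ((2 : ℝ) ^ Fintype.card ι)⁻¹ • ∑ ε, D ε *ᵥ M *ᵥ D ε *ᵥ v := by
    calc (fun i => M i i * v i)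
        = diagonal M.diag *ᵥ v := funext fun i => (mulVec_diagonal _ _ _).symm
      _ = (((2 : ℝ) ^ Fintype.card ι)⁻¹ • ∑ ε, D ε * M * D ε) *ᵥ v := by
        rw [sum_diagonal_mul_mul_diagonal_units_int, smul_smul, inv_mul_cancel₀ h2.ne', one_smul]
      _ = _ := by simp only [smul_mulVec, sum_mulVec, mulVec_mulVec, mul_assoc]
  have hsign : ∀ ε w, ‖toLp p (D ε *ᵥ w)‖ = ‖toLp p w‖ := fun ε w =>
    PiLp.norm_toLp_congr p fun i => by
      rcases Int.units_eq_one_or (ε i) with h | h <;> simp [D, mulVec_diagonal, h]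
  calc ‖toLp p (fun i => M i i * v i)‖
      = ((2 : ℝ) ^ Fintype.card ι)⁻¹ * ‖∑ ε, toLp p (D ε *ᵥ M *ᵥ D ε *ᵥ v)‖ := by
        rw [hdiag, toLp_smul, norm_smul, toLp_sum, Real.norm_of_nonneg (by positivity)]
    _ ≤ ((2 : ℝ) ^ Fintype.card ι)⁻¹ * ∑ ε : ι → ℤˣ, c := by
        gcongr
        refine (norm_sum_le _ _).trans (Finset.sum_le_sum fun ε _ => ?_)
        rw [hsign, show D ε *ᵥ v = fun i => ((ε i : ℤ) : ℝ) * v i from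
          funext (mulVec_diagonal _ _)]
        exact h ε
    _ = c := by simp [Fintype.card_units_int]

end SignAveraging

section SignInvariant

variable {ι : Type*}

def IsSignInvariant (f : (ι → ℝ) → ℝ) : Prop :=
  ∀ (ε : ι → ℤˣ) v, f (fun i => (ε i : ℝ) * v i) = f v

variable [DecidableEq ι]

theorem Seminorm.abs_apply_mul_le_of_isSignInvariant {q : Seminorm ℝ (ι → ℝ)}
    (hq : IsSignInvariant q) (v : ι → ℝ) (i : ι) : |v i| * q (Pi.single i 1) ≤ q v := by
  let ε : ι → ℤˣ := fun j => if j = i then 1 else -1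
  have hsum : (2 * v i) • Pi.single i (1 : ℝ) = v + fun j => (ε j : ℝ) * v j := by
    ext j
    by_cases hj : j = i
    · subst hj; simp [ε]; ring
    · simp [ε, hj]
  calc |v i| * q (Pi.single i 1) = q ((2 * v i) • Pi.single i (1 : ℝ)) / 2 := by
        rw [map_smul_eq_mul, Real.norm_eq_abs, abs_mul, abs_two]; ring
    _ ≤ (q v + q fun j => (ε j : ℝ) * v j) / 2 := by
        rw [hsum]; gcongr; exact map_add_le_add q _ _
    _ = q v := by rw [hq]; ring

theorem Seminorm.isBounded_closedBall_of_isSignInvariant [Fintype ι] {q : Seminorm ℝ (ι → ℝ)}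
    (hq : IsSignInvariant q) (hpos : ∀ i, 0 < q (Pi.single i 1)) :
    Bornology.IsBounded (q.closedBall 0 1) := by
  refine isBounded_iff_forall_norm_le.2 ⟨∑ i, (q (Pi.single i 1))⁻¹, fun v hv => ?_⟩
  rw [Seminorm.mem_closedBall_zero] at hv
  refine (pi_norm_le_iff_of_nonneg (by positivity)).2 fun i => ?_
  calc ‖v i‖ ≤ (q (Pi.single i 1))⁻¹ := by
        rw [Real.norm_eq_abs, ← one_div, le_div_iff₀ (hpos i)]
        exact (q.abs_apply_mul_le_of_isSignInvariant hq v i).trans hv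
    _ ≤ ∑ i, (q (Pi.single i 1))⁻¹ :=
        Finset.single_le_sum (fun j _ => (inv_pos.2 (hpos j)).le) (Finset.mem_univ i)

end SignInvariant

theorem bddAbove_norm_toLp_mulVec_image {m n : Type*} [Fintype m] [Fintype n] (p : ℝ≥0∞)
    [Fact (1 ≤ p)] (M : Matrix m n ℝ) {s : Set (n → ℝ)} (hs : Bornology.IsBounded s) :
    BddAbove ((fun v => ‖toLp p (M *ᵥ v)‖) '' s) :=
  (hs.isCompact_closure.bddAbove_image (by fun_prop : Continuous _).continuousOn).mono
    (Set.image_mono subset_closure)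

/-- (Tong's diagonalization) Let `ν` be a norm on `ℝ^N` for which the standard basis is
`1`-unconditional, `1 ≤ p ≤ ∞`, and let `T : (ℝ^N, ν) → ℓ_p^N` be the linear operator
given by the matrix `(t_{ij})`. Then the diagonal operator `T' = diag(t_{11},…,t_{NN})`
satisfies `‖T'‖ ≤ ‖T‖` (operator norms expressed as suprema over the `ν`-unit ball). -/
theorem stmt15 (N : ℕ) (p : ℝ≥0∞) [Fact (1 ≤ p)]
    (ν : (Fin N → ℝ) → ℝ)
    (hadd : ∀ v w, ν (v + w) ≤ ν v + ν w)
    (hsmul : ∀ (c : ℝ) v, ν (c • v) = |c| * ν v)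
    (hzero : ∀ v, ν v = 0 ↔ v = 0)
    (huncond : ∀ ε : Fin N → ℝ, (∀ i, ε i = 1 ∨ ε i = -1) →
      ∀ v, ν (fun i => ε i * v i) = ν v)
    (t : Fin N → Fin N → ℝ) :
    sSup {r : ℝ | ∃ v : Fin N → ℝ, ν v ≤ 1 ∧
        r = ‖(WithLp.equiv p (∀ _ : Fin N, ℝ)).symm (fun i => t i i * v i)‖} ≤
      sSup {r : ℝ | ∃ v : Fin N → ℝ, ν v ≤ 1 ∧
        r = ‖(WithLp.equiv p (∀ _ : Fin N, ℝ)).symm (fun i => ∑ j, t i j * v j)‖} := by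
  let q : Seminorm ℝ (Fin N → ℝ) := .of ν hadd fun c v => by rw [hsmul, Real.norm_eq_abs]
  have hq : IsSignInvariant q := fun ε =>
    huncond _ fun i => by rcases Int.units_eq_one_or (ε i) with h | h <;> simp [h]
  have hpos : ∀ i, 0 < q (Pi.single i 1) := fun i =>
    (apply_nonneg q _).lt_of_ne' fun h => by simpa using (hzero _).1 h
  have hbdd : BddAbove {r : ℝ | ∃ v : Fin N → ℝ, ν v ≤ 1 ∧ r = ‖toLp p (t *ᵥ v)‖} :=
    (bddAbove_norm_toLp_mulVec_image p t (q.isBounded_closedBall_of_isSignInvariant hq hpos)).mono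
      (by rintro _ ⟨v, hv, rfl⟩; exact ⟨v, q.mem_closedBall_zero.2 hv, rfl⟩)
  refine Real.sSup_le ?_ (Real.sSup_nonneg ?_)
  · rintro _ ⟨v, hv, rfl⟩
    exact norm_toLp_diag_mul_le_of_units_int p t v fun ε =>
      le_csSup hbdd ⟨_, (hq ε v).trans_le hv, rfl⟩
  · rintro _ ⟨_, _, rfl⟩
    exact norm_nonneg _
end

section
/- Let E be a normed space, X a Banach lattice, and T : E → X a positively homogeneous map (T(λx) = λT(x) for λ ≥ 0). The following are equivalent: (i) there exists M ≥ 1 such that for all x₁,…,xₙ ∈ E, ‖ ⋁_{k=1}^n |T x_k| ‖ ≤ M · max_{1≤k≤n} ‖x_k‖; (ii) for every norm-null sequence (x_k) in E, the sequence ( ⋁_{k=1}^m |T x_k| )_{m=1}^∞ is norm bounded in X. -/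
/-!
(i) ⇒ (ii): a null sequence is bounded, so (i) bounds all of its partial suprema.

(ii) ⇒ (i): by positive homogeneity it suffices to bound `‖⋁ |T w_k|‖` over the families lying
in some ball of radius `ε`. If no such bound exists, choose for every `j` a family of norms at
most `1 / (j + 1)` whose supremum has norm greater than `j`, and lay these blocks out along one
sequence via `Nat.pair`. That sequence is null, yet its partial suprema dominate every block.
-/

open Finset Filter Topology

section OrderedScalars

variable {X : Type*} [NormedAddCommGroup X] [Lattice X] [HasSolidNorm X] [IsOrderedAddMonoid X]

theorem norm_le_norm_of_nonneg_of_le {a b : X} (ha : 0 ≤ a) (hab : a ≤ b) : ‖a‖ ≤ ‖b‖ :=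
  HasSolidNorm.solid <| by rwa [abs_of_nonneg ha, abs_of_nonneg (ha.trans hab)]

variable [NormedSpace ℝ X]

/- The dyadic multiples of a positive vector are positive (halving is allowed because
`0 ≤ 2 • a → 0 ≤ a` in a lattice-ordered group), and the positive cone is closed. -/
theorem HasSolidNorm.smul_nonneg {c : ℝ} (hc : 0 ≤ c) {x : X} (hx : 0 ≤ x) : 0 ≤ c • x := by
  have dyadic : ∀ k m : ℕ, 0 ≤ ((m : ℝ) / 2 ^ k) • x := by
    intro k
    induction k with
    | zero => intro m; simpa [Nat.cast_smul_eq_nsmul] using nsmul_nonneg hx m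
    | succ k ih =>
      intro m
      apply nsmul_two_semiclosed
      rw [← Nat.cast_smul_eq_nsmul ℝ, smul_smul]
      convert ih m using 2
      push_cast
      ring
  have hlim : Tendsto (fun k : ℕ => (⌊c * 2 ^ k⌋₊ : ℝ) / 2 ^ k) atTop (𝓝 c) :=
    (tendsto_nat_floor_mul_div_atTop hc).comp (tendsto_pow_atTop_atTop_of_one_lt one_lt_two)
  exact (isClosed_le continuous_const (continuous_id.smul continuous_const)).mem_of_tendsto hlim
    (Eventually.of_forall fun k => dyadic k _)

instance HasSolidNorm.posSMulMono : PosSMulMono ℝ X :=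
  .of_smul_nonneg fun _ hc _ hx => HasSolidNorm.smul_nonneg hc hx

end OrderedScalars

section PositiveScaling

variable {X : Type*} [Lattice X] [AddCommGroup X] [Module ℝ X] [PosSMulMono ℝ X]

theorem abs_smul_of_pos {c : ℝ} (hc : 0 < c) (a : X) : |c • a| = c • |a| := by
  change c • a ⊔ -(c • a) = c • (a ⊔ -a)
  rw [← smul_neg]
  exact ((OrderIso.smulRight hc).map_sup a (-a)).symm

theorem Finset.sup'_abs_smul_of_pos {ι : Type*} {s : Finset ι} (hs : s.Nonempty) {c : ℝ}
    (hc : 0 < c) (f : ι → X) :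
    (s.sup' hs fun i => |c • f i|) = c • s.sup' hs fun i => |f i| := by
  simp_rw [abs_smul_of_pos hc]
  exact (map_finset_sup' (OrderIso.smulRight hc) hs _).symm

end PositiveScaling

theorem Fin.sup'_univ_eq_sup'_range {α : Type*} [SemilatticeSup α] (n : ℕ) (f : ℕ → α) :
    (univ.sup' univ_nonempty fun k : Fin (n + 1) => f k) =
      (range (n + 1)).sup' nonempty_range_add_one f := by
  calc _ = (univ.map Fin.valEmbedding).sup' (by simp) f := (sup'_map f _).symm
    _ = _ := sup'_congr _ (by simp [Nat.Iio_eq_range]) fun _ _ => rfl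

section Blocks

variable {E : Type*} [NormedAddCommGroup E] {n : ℕ → ℕ}

noncomputable def blockSeq (n : ℕ → ℕ) (w : ∀ j, Fin (n j + 1) → E) (k : ℕ) : E :=
  Function.extend Fin.val (w k.unpair.1) 0 k.unpair.2

theorem blockSeq_pair (w : ∀ j, Fin (n j + 1) → E) (j : ℕ) (r : Fin (n j + 1)) :
    blockSeq n w (Nat.pair j r) = w j r := by
  rw [blockSeq, Nat.unpair_pair]
  exact Fin.val_injective.extend_apply _ _ r

theorem pair_le_pair_last (j : ℕ) (r : Fin (n j + 1)) : Nat.pair j r ≤ Nat.pair j (n j) :=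
  have : StrictMono (Nat.pair j) :=
    strictMono_nat_of_lt_succ fun m => Nat.pair_lt_pair_right j m.lt_succ_self
  this.monotone (Nat.lt_succ_iff.1 r.isLt)

theorem tendsto_blockSeq {w : ∀ j, Fin (n j + 1) → E} {ε : ℕ → ℝ}
    (hε : Tendsto ε atTop (𝓝 0)) (hw : ∀ j r, ‖w j r‖ ≤ ε j) :
    Tendsto (blockSeq n w) atTop (𝓝 0) := by
  rw [NormedAddGroup.tendsto_nhds_zero]
  intro δ hδ
  obtain ⟨J, hJ⟩ := eventually_atTop.1 (hε.eventually (gt_mem_nhds hδ))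
  -- only the blocks with index below `J` can be large, and they end by position `K`
  set K := (range J).sup fun j => Nat.pair j (n j)
  refine eventually_atTop.2 ⟨K + 1, fun k hk => ?_⟩
  by_cases h : ∃ r : Fin (n k.unpair.1 + 1), r.val = k.unpair.2
  · obtain ⟨r, hr⟩ := h
    rw [blockSeq, ← hr, Fin.val_injective.extend_apply]
    refine (hw _ _).trans_lt (hJ _ (not_lt.1 fun hj => ?_))
    have hkK : k ≤ K := calc
      k = Nat.pair k.unpair.1 r := by rw [hr, Nat.pair_unpair]
      _ ≤ Nat.pair k.unpair.1 (n k.unpair.1) := pair_le_pair_last _ _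
      _ ≤ K := le_sup (f := fun j => Nat.pair j (n j)) (mem_range.2 hj)
    omega
  · simpa [blockSeq, Function.extend_apply' _ _ _ h] using hδ

theorem sup'_le_sup'_range_blockSeq {α : Type*} [SemilatticeSup α] (f : E → α)
    (w : ∀ j, Fin (n j + 1) → E) (j : ℕ) :
    (univ.sup' univ_nonempty fun r => f (w j r)) ≤
      (range (Nat.pair j (n j) + 1)).sup' nonempty_range_add_one fun k => f (blockSeq n w k) :=
  sup'_le _ _ fun r _ => by
    rw [← blockSeq_pair w j r]
    exact le_sup' (fun k => f (blockSeq n w k)) (mem_range_succ_iff.2 (pair_le_pair_last j r))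

end Blocks

section PartialSuprema

variable {E X : Type*} [NormedAddCommGroup E] [NormedAddCommGroup X] [Lattice X] {T : E → X}

theorem exists_bound_sup'_range_of_isBounded {M : ℝ} (hM0 : 0 ≤ M)
    (hM : ∀ (n : ℕ) (x : Fin (n + 1) → E),
      ‖univ.sup' univ_nonempty (fun k => |T (x k)|)‖ ≤ M * univ.sup' univ_nonempty (fun k => ‖x k‖))
    {x : ℕ → E} (hx : Bornology.IsBounded (Set.range x)) :
    ∃ C : ℝ, ∀ m : ℕ, ‖(range (m + 1)).sup' nonempty_range_add_one (fun k => |T (x k)|)‖ ≤ C := by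
  obtain ⟨B, hB⟩ := isBounded_iff_forall_norm_le.1 hx
  refine ⟨M * B, fun m => ?_⟩
  rw [← Fin.sup'_univ_eq_sup'_range]
  exact (hM m _).trans <| mul_le_mul_of_nonneg_left
    (sup'_le _ _ fun k _ => hB _ (Set.mem_range_self _)) hM0

variable [HasSolidNorm X] [IsOrderedAddMonoid X] [NormedSpace ℝ E] [NormedSpace ℝ X]

/-- Rescale the family so that its largest norm is `ε`. -/
theorem exists_uniform_bound_of_bounded_on_small_families
    (hT : ∀ c : ℝ, 0 ≤ c → ∀ x, T (c • x) = c • T x)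
    (hbdd : ∃ ε > 0, ∃ R : ℝ, ∀ (n : ℕ) (w : Fin (n + 1) → E), (∀ k, ‖w k‖ ≤ ε) →
      ‖univ.sup' univ_nonempty (fun k => |T (w k)|)‖ ≤ R) :
    ∃ M : ℝ, 1 ≤ M ∧ ∀ (n : ℕ) (x : Fin (n + 1) → E),
      ‖univ.sup' univ_nonempty (fun k => |T (x k)|)‖ ≤
        M * univ.sup' univ_nonempty (fun k => ‖x k‖) := by
  obtain ⟨ε, hε, R, hR⟩ := hbdd
  refine ⟨max 1 (R / ε), le_max_left _ _, fun n x => ?_⟩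
  set s := univ.sup' univ_nonempty fun k => ‖x k‖
  have hxs : ∀ k, ‖x k‖ ≤ s := fun k => le_sup' (fun k => ‖x k‖) (mem_univ k)
  rcases ((norm_nonneg (x 0)).trans (hxs 0)).eq_or_lt with hs | hs
  · have hT0 : T 0 = 0 := by simpa using hT 0 le_rfl 0
    have hx0 : ∀ k, x k = 0 := fun k => norm_le_zero_iff.1 (hs ▸ hxs k)
    simp [hx0, hT0, ← hs]
  · set c := ε / s
    have hc : 0 < c := div_pos hε hs
    have hsmall : ∀ k, ‖c • x k‖ ≤ ε := fun k => by
      rw [norm_smul, Real.norm_of_nonneg hc.le]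
      calc c * ‖x k‖ ≤ c * s := by gcongr; exact hxs k
        _ = ε := div_mul_cancel₀ _ hs.ne'
    have hscaled := hR n _ hsmall
    simp_rw [hT c hc.le, sup'_abs_smul_of_pos _ hc, norm_smul, Real.norm_of_nonneg hc.le] at hscaled
    calc _ ≤ R / c := (le_div_iff₀' hc).2 hscaled
      _ = R / ε * s := by rw [div_div_eq_mul_div]; ring
      _ ≤ max 1 (R / ε) * s := by gcongr; exact le_max_right _ _

end PartialSuprema

theorem stmt16_general (E X : Type*) [NormedAddCommGroup E] [NormedSpace ℝ E]
    [NormedAddCommGroup X] [Lattice X] [HasSolidNorm X] [IsOrderedAddMonoid X]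
    [NormedSpace ℝ X]
    (T : E → X) (hT : ∀ (c : ℝ), 0 ≤ c → ∀ x, T (c • x) = c • T x) :
    (∃ M : ℝ, 1 ≤ M ∧ ∀ (n : ℕ) (x : Fin (n + 1) → E),
        ‖Finset.univ.sup' Finset.univ_nonempty (fun k => |T (x k)|)‖ ≤
          M * Finset.univ.sup' Finset.univ_nonempty (fun k => ‖x k‖)) ↔
      (∀ x : ℕ → E, Filter.Tendsto x Filter.atTop (nhds 0) →
        ∃ C : ℝ, ∀ m : ℕ,
          ‖(Finset.range (m + 1)).sup' Finset.nonempty_range_add_one (fun k => |T (x k)|)‖ ≤ C) := by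
  refine ⟨fun ⟨M, hM1, hM⟩ x hx => exists_bound_sup'_range_of_isBounded (by linarith) hM
    (Metric.isBounded_range_of_tendsto x hx), fun h => ?_⟩
  refine exists_uniform_bound_of_bounded_on_small_families hT ?_
  by_contra! hlarge
  choose n w hw hR using fun j : ℕ => hlarge (1 / (j + 1)) Nat.one_div_pos_of_nat j
  obtain ⟨C, hC⟩ := h _ (tendsto_blockSeq tendsto_one_div_add_atTop_nhds_zero_nat hw)
  obtain ⟨j, hj⟩ := exists_nat_gt C
  have hnonneg : 0 ≤ univ.sup' univ_nonempty fun r => |T (w j r)| :=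
    le_sup'_of_le _ (mem_univ 0) (abs_nonneg _)
  have hle := norm_le_norm_of_nonneg_of_le hnonneg (sup'_le_sup'_range_blockSeq (|T ·|) w j)
  linarith [hR j, hC (Nat.pair j (n j))]

/-- Let `E` be a normed space, `X` a Banach lattice, and `T : E → X` positively
homogeneous. The following are equivalent:
(i) there is `M ≥ 1` with `‖⋁_{k≤n} |T x_k|‖ ≤ M · max_k ‖x_k‖` for all finite families;
(ii) for every norm-null sequence `(x_k)` in `E`, the sequence `(⋁_{k≤m} |T x_k|)_m` is
norm bounded in `X`. -/
theorem stmt16 (E X : Type*) [NormedAddCommGroup E] [NormedSpace ℝ E]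
    [NormedAddCommGroup X] [Lattice X] [HasSolidNorm X] [IsOrderedAddMonoid X]
    [NormedSpace ℝ X] [CompleteSpace X]
    (T : E → X) (hT : ∀ (c : ℝ), 0 ≤ c → ∀ x, T (c • x) = c • T x) :
    (∃ M : ℝ, 1 ≤ M ∧ ∀ (n : ℕ) (x : Fin (n + 1) → E),
        ‖Finset.univ.sup' Finset.univ_nonempty (fun k => |T (x k)|)‖ ≤
          M * Finset.univ.sup' Finset.univ_nonempty (fun k => ‖x k‖)) ↔
      (∀ x : ℕ → E, Filter.Tendsto x Filter.atTop (nhds 0) →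
        ∃ C : ℝ, ∀ m : ℕ,
          ‖(Finset.range (m + 1)).sup' Finset.nonempty_range_add_one (fun k => |T (x k)|)‖ ≤ C) :=
  stmt16_general E X T hT
end

section
/- Let E be a Banach lattice whose order is induced by a normalized 1-unconditional basis (e_k), with biorthogonal functionals (e_k*). For k ∈ ℕ define f_k : E* → ℝ by f_k(x*) = ( |x*(e_k)| − 2^{2k}( Σ_{i<k} |x*(e_i)| + Σ_{i>k} 2^{−i} |x*(e_i)| ) )₊. Then the functions f_k are pairwise disjoint: for all i ≠ j and all x* ∈ E*, f_i(x*) · f_j(x*) = 0. -/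
/-!
Write `a_n = |x*(e_n)|`, a bounded sequence. For `i < j`, positivity of `f_j` gives
`a_j > 2^{2j} a_i` (the term `a_i` occurs in the head sum of `f_j`), while positivity of `f_i`
gives `a_i > 2^{-j} a_j` (the term `a_j` occurs in the tail of `f_i`). Together
`2^{2j} a_i < a_j < 2^j a_i`, which is impossible for `a_i ≥ 0`.
-/

/-- The function `f_k(x*) = (|x*(e_k)| - 2^{2k}(∑_{i<k} |x*(e_i)| + ∑_{i>k} 2^{-i} |x*(e_i)|))₊`
on the dual of a Banach space with a distinguished sequence `(e_k)`. -/
noncomputable def fk (E : Type*) [NormedAddCommGroup E] [NormedSpace ℝ E]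
    (e : ℕ → E) (k : ℕ) (x : StrongDual ℝ E) : ℝ :=
  max (|x (e k)| - 2 ^ (2 * k) *
    ((∑ i ∈ Finset.range k, |x (e i)|) +
      ∑' i : ℕ, if k < i then ((1 : ℝ) / 2) ^ i * |x (e i)| else 0)) 0

noncomputable def peakExcess (a : ℕ → ℝ) (k : ℕ) : ℝ :=
  a k - 2 ^ (2 * k) *
    ((∑ i ∈ Finset.range k, a i) + ∑' i : ℕ, if k < i then ((1 : ℝ) / 2) ^ i * a i else 0)

section peakExcess

variable {a : ℕ → ℝ} {i j : ℕ}

lemma peakExcess_le_of_lt (ha : ∀ n, 0 ≤ a n) (hij : i < j) :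
    peakExcess a j ≤ a j - 2 ^ (2 * j) * a i := by
  have hhead : a i ≤ ∑ l ∈ Finset.range j, a l :=
    Finset.single_le_sum (fun l _ => ha l) (Finset.mem_range.mpr hij)
  have htail : 0 ≤ ∑' n : ℕ, if j < n then ((1 : ℝ) / 2) ^ n * a n else 0 :=
    tsum_nonneg fun n => ite_nonneg (mul_nonneg (by positivity) (ha n)) le_rfl
  unfold peakExcess
  gcongr
  linarith

lemma peakExcess_le_of_gt (ha : ∀ n, 0 ≤ a n) (hs : Summable fun n => ((1 : ℝ) / 2) ^ n * a n)
    (hij : i < j) : peakExcess a i ≤ a i - ((1 : ℝ) / 2) ^ j * a j := by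
  have hterm : ∀ n, 0 ≤ ((1 : ℝ) / 2) ^ n * a n := fun n => mul_nonneg (by positivity) (ha n)
  have htail : ((1 : ℝ) / 2) ^ j * a j ≤
      ∑' n : ℕ, if i < n then ((1 : ℝ) / 2) ^ n * a n else 0 := by
    have hs' : Summable fun n => if i < n then ((1 : ℝ) / 2) ^ n * a n else 0 :=
      hs.of_nonneg_of_le (fun n => ite_nonneg (hterm n) le_rfl)
        (fun n => by split_ifs; exacts [le_rfl, hterm n])
    simpa [if_pos hij] using hs'.le_tsum j fun n _ => ite_nonneg (hterm n) le_rfl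
  have hhead : 0 ≤ ∑ l ∈ Finset.range i, a l := Finset.sum_nonneg fun l _ => ha l
  have hweight : (1 : ℝ) ≤ 2 ^ (2 * i) := one_le_pow₀ one_le_two
  unfold peakExcess
  nlinarith [hterm j]

lemma peakExcess_nonpos_of_lt_of_pos (ha : ∀ n, 0 ≤ a n)
    (hs : Summable fun n => ((1 : ℝ) / 2) ^ n * a n) (hij : i < j)
    (hi : 0 < peakExcess a i) : peakExcess a j ≤ 0 := by
  by_contra! hj
  have hlow : 2 ^ (2 * j) * a i < a j := by linarith [peakExcess_le_of_lt ha hij]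
  have hup : a j < 2 ^ j * a i := by
    have hpos : 0 < 2 ^ j * (a i - ((1 : ℝ) / 2) ^ j * a j) :=
      mul_pos (by positivity) (hi.trans_le (peakExcess_le_of_gt ha hs hij))
    have hcancel : (2 : ℝ) ^ j * ((1 : ℝ) / 2) ^ j = 1 := by rw [← mul_pow]; norm_num
    rw [mul_sub, ← mul_assoc, hcancel, one_mul] at hpos
    linarith
  have hpow : (2 : ℝ) ^ j * a i ≤ 2 ^ (2 * j) * a i :=
    mul_le_mul_of_nonneg_right (pow_le_pow_right₀ one_le_two (by omega)) (ha i)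
  linarith

lemma max_peakExcess_mul_max_peakExcess_eq_zero (ha : ∀ n, 0 ≤ a n)
    (hs : Summable fun n => ((1 : ℝ) / 2) ^ n * a n) (hij : i ≠ j) :
    max (peakExcess a i) 0 * max (peakExcess a j) 0 = 0 := by
  wlog hlt : i < j generalizing i j
  · rw [mul_comm]
    exact this hij.symm (lt_of_le_of_ne (not_lt.mp hlt) hij.symm)
  by_cases hi : 0 < peakExcess a i
  · rw [max_eq_right (peakExcess_nonpos_of_lt_of_pos ha hs hlt hi), mul_zero]
  · rw [max_eq_right (not_lt.mp hi), zero_mul]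

end peakExcess

lemma summable_half_pow_mul_of_bounded {a : ℕ → ℝ} {C : ℝ} (ha : ∀ n, 0 ≤ a n)
    (hC : ∀ n, a n ≤ C) : Summable fun n => ((1 : ℝ) / 2) ^ n * a n :=
  (summable_geometric_two.mul_right C).of_nonneg_of_le
    (fun n => mul_nonneg (by positivity) (ha n))
    (fun n => mul_le_mul_of_nonneg_left (hC n) (by positivity))

theorem stmt18_general (E : Type*) [NormedAddCommGroup E] [NormedSpace ℝ E] (e : ℕ → E)
    (hnorm : ∀ k, ‖e k‖ = 1) :
    ∀ i j, i ≠ j → ∀ x : StrongDual ℝ E, fk E e i x * fk E e j x = 0 := by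
  intro i j hij x
  have hbound : ∀ n, |x (e n)| ≤ ‖x‖ := fun n => by
    simpa [hnorm n] using x.le_opNorm (e n)
  exact max_peakExcess_mul_max_peakExcess_eq_zero (fun n => abs_nonneg _)
    (summable_half_pow_mul_of_bounded (fun n => abs_nonneg _) hbound) hij

/-- Let `E` be a Banach lattice whose order is induced by a normalized `1`-unconditional
basis `(e_k)` with biorthogonal functionals. Then the functions `f_k` above are pairwise
disjoint: `f_i(x*) · f_j(x*) = 0` for all `i ≠ j` and all `x* ∈ E*`. -/
theorem stmt18 (E : Type*) [NormedAddCommGroup E] [NormedSpace ℝ E] [CompleteSpace E]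
    [Lattice E] (e : ℕ → E)
    (hnorm : ∀ k, ‖e k‖ = 1)
    (huncond : ∀ (s : Finset ℕ) (a ε : ℕ → ℝ), (∀ k, ε k = 1 ∨ ε k = -1) →
      ‖∑ k ∈ s, (ε k * a k) • e k‖ = ‖∑ k ∈ s, a k • e k‖)
    (hbiorth : ∃ e' : ℕ → StrongDual ℝ E,
      ∀ k l, e' k (e l) = if k = l then (1 : ℝ) else 0) :
    ∀ i j, i ≠ j → ∀ x : StrongDual ℝ E, fk E e i x * fk E e j x = 0 :=
  stmt18_general E e hnorm
end
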